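/- Assumption (*) of the context holds with the following choices of pairwise distinct α's and β's: (1) s = r = 1 with (α_1, β_1) = (1, 0); (2) s = 2, r = 1 with (α_1, α_2, β_1) = (1, −n_1/n_2, 0); (3) s = 1, r = 2 with (α_1, β_1, β_2) = (0, 1, −m_1/m_2); (4) s = 3, r = 1 with (α_1, α_2, α_3, β_1) = ((t+2)/4, −(t−2)/4, 1, 0), provided p ∤ (t+2), p ∤ (t−2) and (n_1, n_2, n_3) = (p−2, 2, t); (5) s = r = 2 with (α_1, α_2, β_1, β_2) = (1, (n_2−n_1)/(2n_2), 0, t/(2n_2)), provided n_i ≡ m_i (mod p) for i = 1, 2 and n_1 ≠ n_2 in k. In each case the listed elements of k are pairwise distinct and the polynomial g(y) is a nonzero constant. -/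

import Mathlib

open Polynomial

namespace IC

/-- The polynomial `g(y)` of Assumption (*):
`g(y) = ∏_l (y−β_l) · (Σ_i n_i ∏_{j≠i} (y−α_j)) − ∏_i (y−α_i) · (Σ_l m_l ∏_{u≠l} (y−β_u))`,
where the integers `n i`, `m l` are regarded in `k` via the canonical map. -/
noncomputable def gPoly {k : Type} [Field k] {s r : ℕ}
    (n : Fin s → ℕ) (m : Fin r → ℕ) (α : Fin s → k) (β : Fin r → k) : Polynomial k :=
  (∏ l, (X - C (β l))) *
      (∑ i, C ((n i : k)) * ∏ j ∈ Finset.univ.erase i, (X - C (α j))) -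
    (∏ i, (X - C (α i))) *
      (∑ l, C ((m l : k)) * ∏ u ∈ Finset.univ.erase l, (X - C (β u)))

/-- Assumption (*): the elements `α 1, …, α s, β 1, …, β r` of `k` are pairwise distinct
and the polynomial `g(y)` is a nonzero constant in `k[y]`. -/
def AssumptionStar {k : Type} [Field k] {s r : ℕ}
    (n : Fin s → ℕ) (m : Fin r → ℕ) (α : Fin s → k) (β : Fin r → k) : Prop :=
  Function.Injective (Sum.elim α β) ∧ ∃ c : k, c ≠ 0 ∧ gPoly n m α β = C c

end IC

/-! In each case `g` is computed in closed form. Since `p = 0` in `k`, the conditions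
`Σ nᵢ = p + t` and `Σ mₗ = t` give `Σ nᵢ = Σ mₗ` in `k`; together with the linear relations
defining the chosen points (e.g. `α₁ + α₂ = 1` and `2 (α₁ - α₂) = t` in case (4)) this makes
`g - c` a `k[X]`-combination of those relations, where `c` is a product of nonzero quantities
such as `t α₁ α₂`. The same relations force the points to be pairwise distinct. -/

open Finset

theorem Function.injective_sumElim_iff_nodup {α : Type*} {s r : ℕ} (a : Fin s → α)
    (b : Fin r → α) : Function.Injective (Sum.elim a b) ↔ (List.ofFn a ++ List.ofFn b).Nodup := by
  rw [Sum.elim_injective, ← Fin.append_injective_iff, ← List.nodup_ofFn, List.ofFn_fin_append]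

theorem Fin.prod_univ_erase_eq_prod_succAbove {M : Type*} [CommMonoid M] {n : ℕ}
    (i : Fin (n + 1)) (f : Fin (n + 1) → M) :
    ∏ j ∈ univ.erase i, f j = ∏ j, f (i.succAbove j) := by
  rw [← compl_singleton, ← Fin.image_succAbove_univ, prod_image Fin.succAbove_right_injective.injOn]

theorem CharP.natCast_add_eq_of_add_eq_char_add {k : Type*} [AddMonoidWithOne k] (p : ℕ)
    [CharP k p] {a b t : ℕ} (h : a + b = p + t) : (a : k) + b = t := by
  simpa using congrArg (Nat.cast : ℕ → k) h

namespace IC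

variable {k : Type} [Field k]

section ClosedForms

variable (n₁ n₂ n₃ m₁ m₂ : ℕ) (α₁ α₂ α₃ β₁ β₂ : k)

theorem gPoly_one_one :
    gPoly ![n₁] ![m₁] ![α₁] ![β₁] = C (n₁ : k) * (X - C β₁) - C (m₁ : k) * (X - C α₁) := by
  simp [gPoly]
  ring

theorem gPoly_two_one :
    gPoly ![n₁, n₂] ![m₁] ![α₁, α₂] ![β₁] =
      (X - C β₁) * (C (n₁ : k) * (X - C α₂) + C (n₂ : k) * (X - C α₁)) -
        C (m₁ : k) * (X - C α₁) * (X - C α₂) := by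
  simp [gPoly, Fin.sum_univ_succ, Fin.prod_univ_erase_eq_prod_succAbove]
  ring

theorem gPoly_one_two :
    gPoly ![n₁] ![m₁, m₂] ![α₁] ![β₁, β₂] =
      C (n₁ : k) * (X - C β₁) * (X - C β₂) -
        (X - C α₁) * (C (m₁ : k) * (X - C β₂) + C (m₂ : k) * (X - C β₁)) := by
  simp [gPoly, Fin.sum_univ_succ, Fin.prod_univ_erase_eq_prod_succAbove]
  ring

theorem gPoly_three_one :
    gPoly ![n₁, n₂, n₃] ![m₁] ![α₁, α₂, α₃] ![β₁] =
      (X - C β₁) * (C (n₁ : k) * (X - C α₂) * (X - C α₃) +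
        C (n₂ : k) * (X - C α₁) * (X - C α₃) + C (n₃ : k) * (X - C α₁) * (X - C α₂)) -
        C (m₁ : k) * (X - C α₁) * (X - C α₂) * (X - C α₃) := by
  simp [gPoly, Fin.sum_univ_succ, Fin.prod_univ_succ, Fin.prod_univ_erase_eq_prod_succAbove]
  ring

theorem gPoly_two_two :
    gPoly ![n₁, n₂] ![m₁, m₂] ![α₁, α₂] ![β₁, β₂] =
      (X - C β₁) * (X - C β₂) * (C (n₁ : k) * (X - C α₂) + C (n₂ : k) * (X - C α₁)) -
        (X - C α₁) * (X - C α₂) * (C (m₁ : k) * (X - C β₂) + C (m₂ : k) * (X - C β₁)) := by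
  simp [gPoly, Fin.sum_univ_succ, Fin.prod_univ_erase_eq_prod_succAbove]

end ClosedForms

theorem assumptionStar_one_one {n m : ℕ} (h : (n : k) = m) (hm : (m : k) ≠ 0) :
    AssumptionStar ![n] ![m] ![(1 : k)] ![0] := by
  refine ⟨by rw [Function.injective_sumElim_iff_nodup]; simp, m, hm, ?_⟩
  rw [gPoly_one_one, h, map_one, map_zero]
  ring

theorem assumptionStar_two_one {n₁ n₂ m : ℕ} {α : k} (hn : (n₁ : k) + n₂ = m)
    (hα : (n₂ : k) * α = -n₁) (hn₁ : (n₁ : k) ≠ 0) (hm : (m : k) ≠ 0) :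
    AssumptionStar ![n₁, n₂] ![m] ![1, α] ![0] := by
  have hα₀ : α ≠ 0 := by rintro rfl; exact hn₁ (by linear_combination hα)
  have hα₁ : α ≠ 1 := by rintro rfl; exact hm (by linear_combination -hn + hα)
  refine ⟨?_, -m * α, mul_ne_zero (neg_ne_zero.mpr hm) hα₀, ?_⟩
  · rw [Function.injective_sumElim_iff_nodup]; simp [hα₀, hα₁.symm]
  · have hn' := congrArg C hn
    have hα' := congrArg C hα
    simp only [map_add, map_mul, map_neg] at hn' hα'
    rw [gPoly_two_one, map_mul, map_neg, map_one, map_zero]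
    linear_combination (X ^ 2 - (1 + C α) * X) * hn' + X * hα'

theorem assumptionStar_one_two {n m₁ m₂ : ℕ} {β : k} (hm : (m₁ : k) + m₂ = n)
    (hβ : (m₂ : k) * β = -m₁) (hm₁ : (m₁ : k) ≠ 0) (hn : (n : k) ≠ 0) :
    AssumptionStar ![n] ![m₁, m₂] ![0] ![1, β] := by
  have hβ₀ : β ≠ 0 := by rintro rfl; exact hm₁ (by linear_combination hβ)
  have hβ₁ : β ≠ 1 := by rintro rfl; exact hn (by linear_combination -hm + hβ)
  refine ⟨?_, n * β, mul_ne_zero hn hβ₀, ?_⟩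
  · rw [Function.injective_sumElim_iff_nodup]; simp [hβ₀.symm, hβ₁.symm]
  · have hm' := congrArg C hm
    have hβ' := congrArg C hβ
    simp only [map_add, map_mul, map_neg] at hm' hβ'
    rw [gPoly_one_two, map_mul, map_one, map_zero]
    linear_combination -(X ^ 2 - (1 + C β) * X) * hm' - X * hβ'

theorem assumptionStar_three_one {n₁ m : ℕ} {α₁ α₂ : k} (hn₁ : (n₁ : k) = -2)
    (hm : (m : k) ≠ 0) (hm_add_two : (m : k) + 2 ≠ 0) (hm_sub_two : (m : k) - 2 ≠ 0)
    (hsum : α₁ + α₂ = 1) (hdiff : 2 * (α₁ - α₂) = m) :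
    AssumptionStar ![n₁, 2, m] ![m] ![α₁, α₂, 1] ![0] := by
  have h₁₂ : α₁ ≠ α₂ := by rintro rfl; exact hm (by linear_combination -hdiff)
  have hα₁₀ : α₁ ≠ 0 := by rintro rfl; exact hm_add_two (by linear_combination -hdiff - 2 * hsum)
  have hα₁₁ : α₁ ≠ 1 := by rintro rfl; exact hm_sub_two (by linear_combination -hdiff - 2 * hsum)
  have hα₂₀ : α₂ ≠ 0 := by rintro rfl; exact hm_sub_two (by linear_combination -hdiff + 2 * hsum)
  have hα₂₁ : α₂ ≠ 1 := by rintro rfl; exact hm_add_two (by linear_combination -hdiff + 2 * hsum)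
  refine ⟨?_, m * α₁ * α₂, mul_ne_zero (mul_ne_zero hm hα₁₀) hα₂₀, ?_⟩
  · rw [Function.injective_sumElim_iff_nodup]
    simp [h₁₂, hα₁₀, hα₁₁, hα₂₀, hα₂₁]
  · have hsum' := congrArg C hsum
    have hdiff' := congrArg C hdiff
    simp only [map_add, map_sub, map_mul, map_one, map_ofNat] at hsum' hdiff'
    rw [gPoly_three_one, hn₁, map_mul, map_mul, map_neg, map_ofNat, Nat.cast_ofNat, map_ofNat,
      map_one, map_zero]
    linear_combination (X - X ^ 2) * hdiff' - C (m : k) * X * hsum'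

theorem assumptionStar_two_two {n₁ n₂ m₁ m₂ : ℕ} {a b : k} (hm₁ : (m₁ : k) = n₁)
    (hm₂ : (m₂ : k) = n₂) (hn₁ : (n₁ : k) ≠ 0) (hne : (n₁ : k) ≠ n₂) (hn : (n₁ : k) + n₂ ≠ 0)
    (hab : a + b = 1) (hba : (n₂ : k) * (b - a) = n₁) :
    AssumptionStar ![n₁, n₂] ![m₁, m₂] ![1, a] ![0, b] := by
  have ha₁ : a ≠ 1 := by rintro rfl; exact hn (by linear_combination -hba + n₂ * hab)
  have hb₁ : b ≠ 1 := by rintro rfl; exact hne (by linear_combination -hba - n₂ * hab)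
  have ha₀ : a ≠ 0 := by rintro rfl; exact hne (by linear_combination -hba + n₂ * hab)
  have hb₀ : b ≠ 0 := by rintro rfl; exact hn (by linear_combination -hba - n₂ * hab)
  have ha_ne_b : a ≠ b := by rintro rfl; exact hn₁ (by linear_combination -hba)
  refine ⟨?_, n₁ * a * b, mul_ne_zero (mul_ne_zero hn₁ ha₀) hb₀, ?_⟩
  · rw [Function.injective_sumElim_iff_nodup]
    simp [ha₁.symm, hb₁.symm, ha₀, hb₀.symm, ha_ne_b]
  · have hab' := congrArg C hab
    have hba' := congrArg C hba
    simp only [map_add, map_sub, map_mul, map_one] at hab' hba'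
    rw [gPoly_two_two, hm₁, hm₂, map_mul, map_mul, map_one, map_zero]
    linear_combination (X - X ^ 2) * hba' - C (n₁ : k) * X * hab'

end IC

theorem assumptionStar_holds_general
    (p : ℕ) (hp : p.Prime) (hodd : Odd p)
    (k : Type) [Field k] [CharP k p] :
    (∀ t : ℕ, 1 ≤ t → ¬ p ∣ t → 5 ≤ p + t →
      IC.AssumptionStar (k := k) ![p + t] ![t] ![(1 : k)] ![(0 : k)]) ∧
    (∀ t n₁ n₂ : ℕ, 1 ≤ t → ¬ p ∣ t → 5 ≤ p + t →
      0 < n₁ → 0 < n₂ → ¬ p ∣ n₁ → ¬ p ∣ n₂ → n₁ + n₂ = p + t →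
      IC.AssumptionStar (k := k) ![n₁, n₂] ![t]
        ![(1 : k), -(n₁ : k) / (n₂ : k)] ![(0 : k)]) ∧
    (∀ t m₁ m₂ : ℕ, 1 ≤ t → ¬ p ∣ t → 5 ≤ p + t →
      0 < m₁ → 0 < m₂ → ¬ p ∣ m₁ → ¬ p ∣ m₂ → m₁ + m₂ = t →
      IC.AssumptionStar (k := k) ![p + t] ![m₁, m₂]
        ![(0 : k)] ![(1 : k), -(m₁ : k) / (m₂ : k)]) ∧
    (∀ t : ℕ, 1 ≤ t → ¬ p ∣ t → 5 ≤ p + t →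
      ¬ ((p : ℤ) ∣ ((t : ℤ) + 2)) → ¬ ((p : ℤ) ∣ ((t : ℤ) - 2)) →
      IC.AssumptionStar (k := k) ![p - 2, 2, t] ![t]
        ![((t : k) + 2) / 4, -((t : k) - 2) / 4, (1 : k)] ![(0 : k)]) ∧
    (∀ t n₁ n₂ m₁ m₂ : ℕ, 1 ≤ t → ¬ p ∣ t → 5 ≤ p + t →
      0 < n₁ → 0 < n₂ → 0 < m₁ → 0 < m₂ →
      ¬ p ∣ n₁ → ¬ p ∣ n₂ → ¬ p ∣ m₁ → ¬ p ∣ m₂ →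
      n₁ + n₂ = p + t → m₁ + m₂ = t →
      n₁ % p = m₁ % p → n₂ % p = m₂ % p → (n₁ : k) ≠ (n₂ : k) →
      IC.AssumptionStar (k := k) ![n₁, n₂] ![m₁, m₂]
        ![(1 : k), ((n₂ : k) - (n₁ : k)) / (2 * (n₂ : k))]
        ![(0 : k), (t : k) / (2 * (n₂ : k))]) := by
  have hcast : ∀ a : ℕ, ¬ p ∣ a → (a : k) ≠ 0 := fun a => (CharP.cast_eq_zero_iff k p a).not.mpr
  have hintCast : ∀ a : ℤ, ¬ (p : ℤ) ∣ a → (a : k) ≠ 0 :=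
    fun a => (CharP.intCast_eq_zero_iff k p a).not.mpr
  have h2 : (2 : k) ≠ 0 := Ring.two_ne_zero <| by
    rw [ringChar.eq k p]; rintro rfl; exact Nat.not_odd_iff_even.mpr even_two hodd
  refine ⟨fun t _ hpt _ => ?_, fun t n₁ n₂ _ hpt _ _ _ hpn₁ hpn₂ hsum => ?_,
    fun t m₁ m₂ _ hpt _ _ _ hpm₁ hpm₂ hsum => ?_, fun t _ hpt _ hpt₂ hpt₂' => ?_,
    fun t n₁ n₂ m₁ m₂ _ hpt _ _ _ _ _ hpn₁ hpn₂ _ _ hsumn _ hmod₁ hmod₂ hne => ?_⟩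
  · exact IC.assumptionStar_one_one (by simp) (hcast t hpt)
  · exact IC.assumptionStar_two_one (CharP.natCast_add_eq_of_add_eq_char_add p hsum)
      (mul_div_cancel₀ _ (hcast n₂ hpn₂)) (hcast n₁ hpn₁) (hcast t hpt)
  · exact IC.assumptionStar_one_two (by simpa using congrArg (Nat.cast : ℕ → k) hsum)
      (mul_div_cancel₀ _ (hcast m₂ hpm₂)) (hcast m₁ hpm₁) (by simpa using hcast t hpt)
  · have h4 : (4 : k) ≠ 0 := by simpa [show (4 : k) = 2 * 2 by norm_num] using h2
    refine IC.assumptionStar_three_one ?_ (hcast t hpt) (by exact_mod_cast hintCast _ hpt₂)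
      (by exact_mod_cast hintCast _ hpt₂') (by field_simp; ring) (by field_simp; ring)
    rw [Nat.cast_sub hp.two_le, CharP.cast_eq_zero, zero_sub, Nat.cast_ofNat]
  · have hn₂ := hcast n₂ hpn₂
    have ht := CharP.natCast_add_eq_of_add_eq_char_add (k := k) p hsumn
    refine IC.assumptionStar_two_two (CharP.natCast_eq_natCast' k p hmod₁.symm)
      (CharP.natCast_eq_natCast' k p hmod₂.symm) (hcast n₁ hpn₁) hne
      (ht ▸ hcast t hpt) (by field_simp; linear_combination -ht)
      (by field_simp; linear_combination -ht)

/-- **Lemma.**  Over an algebraically closed field `k` of odd characteristic `p`,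
Assumption (*) holds with the following choices of pairwise distinct `α`'s and `β`'s
(with `t ≥ 1` coprime to `p`, `p + t ≥ 5`, all `n`'s and `m`'s positive and coprime to `p`,
`Σ n_i = p + t` and `Σ m_l = t`):
(1) `s = r = 1` with `(α₁, β₁) = (1, 0)`;
(2) `s = 2`, `r = 1` with `(α₁, α₂, β₁) = (1, −n₁/n₂, 0)`;
(3) `s = 1`, `r = 2` with `(α₁, β₁, β₂) = (0, 1, −m₁/m₂)`;
(4) `s = 3`, `r = 1` with `(α₁, α₂, α₃, β₁) = ((t+2)/4, −(t−2)/4, 1, 0)`, provided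
    `p ∤ (t+2)`, `p ∤ (t−2)` and `(n₁, n₂, n₃) = (p−2, 2, t)`;
(5) `s = r = 2` with `(α₁, α₂, β₁, β₂) = (1, (n₂−n₁)/(2n₂), 0, t/(2n₂))`, provided
    `n_i ≡ m_i (mod p)` for `i = 1, 2` and `n₁ ≠ n₂` in `k`. -/
theorem assumptionStar_holds
    (p : ℕ) (hp : p.Prime) (hodd : Odd p)
    (k : Type) [Field k] [IsAlgClosed k] [CharP k p] :
    (∀ t : ℕ, 1 ≤ t → ¬ p ∣ t → 5 ≤ p + t →
      IC.AssumptionStar (k := k) ![p + t] ![t] ![(1 : k)] ![(0 : k)]) ∧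
    (∀ t n₁ n₂ : ℕ, 1 ≤ t → ¬ p ∣ t → 5 ≤ p + t →
      0 < n₁ → 0 < n₂ → ¬ p ∣ n₁ → ¬ p ∣ n₂ → n₁ + n₂ = p + t →
      IC.AssumptionStar (k := k) ![n₁, n₂] ![t]
        ![(1 : k), -(n₁ : k) / (n₂ : k)] ![(0 : k)]) ∧
    (∀ t m₁ m₂ : ℕ, 1 ≤ t → ¬ p ∣ t → 5 ≤ p + t →
      0 < m₁ → 0 < m₂ → ¬ p ∣ m₁ → ¬ p ∣ m₂ → m₁ + m₂ = t →
      IC.AssumptionStar (k := k) ![p + t] ![m₁, m₂]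
        ![(0 : k)] ![(1 : k), -(m₁ : k) / (m₂ : k)]) ∧
    (∀ t : ℕ, 1 ≤ t → ¬ p ∣ t → 5 ≤ p + t →
      ¬ ((p : ℤ) ∣ ((t : ℤ) + 2)) → ¬ ((p : ℤ) ∣ ((t : ℤ) - 2)) →
      IC.AssumptionStar (k := k) ![p - 2, 2, t] ![t]
        ![((t : k) + 2) / 4, -((t : k) - 2) / 4, (1 : k)] ![(0 : k)]) ∧
    (∀ t n₁ n₂ m₁ m₂ : ℕ, 1 ≤ t → ¬ p ∣ t → 5 ≤ p + t →
      0 < n₁ → 0 < n₂ → 0 < m₁ → 0 < m₂ →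
      ¬ p ∣ n₁ → ¬ p ∣ n₂ → ¬ p ∣ m₁ → ¬ p ∣ m₂ →
      n₁ + n₂ = p + t → m₁ + m₂ = t →
      n₁ % p = m₁ % p → n₂ % p = m₂ % p → (n₁ : k) ≠ (n₂ : k) →
      IC.AssumptionStar (k := k) ![n₁, n₂] ![m₁, m₂]
        ![(1 : k), ((n₂ : k) - (n₁ : k)) / (2 * (n₂ : k))]
        ![(0 : k), (t : k) / (2 * (n₂ : k))]) :=
  assumptionStar_holds_general p hp hodd k
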